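/- Let x ∈ ℝ^N with N ≥ 2 and let G = (V, E) be a directed graph on V = {1,…,N} that contains a directed spanning tree. Then there exist nodes i, j with (j,i) ∈ E and |x_i − x_j| ≥ (1/(N−1))·(max_m x_m − min_m x_m). -/
import Mathlib


open Finset

private lemma cross14 {α : Type*} {r : α → α → Prop} {S : α → Prop} {a b : α}
    (h : Relation.ReflTransGen r a b) :
    S a → ¬ S b → ∃ u v, r u v ∧ S u ∧ ¬ S v := by
  induction h with
  | refl => exact fun ha hb => absurd ha hb
  | @tail b c hab hbc ih =>
      intro ha hc
      by_cases hSb : S b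
      · exact ⟨b, c, hbc, hSb, hc⟩
      · exact ih ha hSb

theorem stmt14 {N : ℕ} (hN : 2 ≤ N) [NeZero N] (x : Fin N → ℝ)
    (E : Fin N → Fin N → Prop)
    (root : Fin N)
    (hspan : ∀ i : Fin N, Relation.ReflTransGen (fun j i => E j i) root i) :
    ∃ i j : Fin N, E j i ∧
      ((N : ℝ) - 1)⁻¹ * (Finset.univ.sup' Finset.univ_nonempty x -
        Finset.univ.inf' Finset.univ_nonempty x) ≤ |x i - x j| := by
  have hNpos : 0 < N := by omega
  have hN1pos : 0 < N - 1 := by omega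
  have hN1lt : N - 1 < N := by omega
  set σ := Tuple.sort x with hσ
  set g : Fin N → ℝ := x ∘ σ with hg
  have hmono : Monotone g := Tuple.monotone_sort x
  -- y : ℕ → ℝ, monotone extension of g
  set y : ℕ → ℝ := fun m => g ⟨min m (N - 1), lt_of_le_of_lt (min_le_right _ _) hN1lt⟩
    with hy
  have hymono : Monotone y := by
    intro a b hab
    exact hmono (by simp [Fin.le_def]; omega)
  have hyval : ∀ m (hm : m ≤ N - 1), y m = g ⟨m, lt_of_le_of_lt hm hN1lt⟩ := by
    intro m hm
    simp only [hy]
    congr 1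
    exact Fin.ext (by simp [Nat.min_eq_left hm])
  have hxg : ∀ v : Fin N, x v = g (σ.symm v) := by
    intro v; simp [hg]
  -- sup' = y (N-1), inf' = y 0
  have hsup : Finset.univ.sup' Finset.univ_nonempty x = y (N - 1) := by
    rw [hyval (N - 1) le_rfl]
    apply le_antisymm
    · apply Finset.sup'_le
      intro i _
      rw [hxg i]
      exact hmono (by simp [Fin.le_def]; omega)
    · exact Finset.le_sup' x (Finset.mem_univ (σ ⟨N - 1, hN1lt⟩))
  have hinf : Finset.univ.inf' Finset.univ_nonempty x = y 0 := by
    rw [hyval 0 (Nat.zero_le _)]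
    apply le_antisymm
    · exact Finset.inf'_le x (Finset.mem_univ (σ ⟨0, hNpos⟩))
    · apply Finset.le_inf'
      intro i _
      rw [hxg i]
      exact hmono (by simp [Fin.le_def])
  set S : ℝ := Finset.univ.sup' Finset.univ_nonempty x -
      Finset.univ.inf' Finset.univ_nonempty x with hS
  set ε : ℝ := ((N : ℝ) - 1)⁻¹ * S with hε
  have hNR : (0:ℝ) < (N : ℝ) - 1 := by
    have : (2:ℝ) ≤ (N:ℝ) := by exact_mod_cast hN
    linarith
  by_cases hSpos : 0 < S
  · -- positive spread
    have hεpos : 0 < ε := mul_pos (inv_pos.mpr hNR) hSpos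
    -- pigeonhole: some gap of size ≥ ε
    have hgap : ∃ k, k < N - 1 ∧ ε ≤ y (k + 1) - y k := by
      by_contra hcon
      push_neg at hcon
      have hsum : ∑ k ∈ Finset.range (N - 1), (y (k + 1) - y k) = S := by
        rw [Finset.sum_range_sub, hS, hsup, hinf]
      have hlt : ∑ k ∈ Finset.range (N - 1), (y (k + 1) - y k)
          < ∑ _k ∈ Finset.range (N - 1), ε := by
        apply Finset.sum_lt_sum_of_nonempty
        · exact Finset.nonempty_range_iff.mpr (by omega)
        · intro k hk
          exact hcon k (Finset.mem_range.mp hk)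
      rw [hsum, Finset.sum_const, Finset.card_range, nsmul_eq_mul] at hlt
      have hcast : ((N - 1 : ℕ) : ℝ) = (N : ℝ) - 1 := by
        push_cast [Nat.cast_sub (by omega : 1 ≤ N)]; ring
      rw [hcast, hε, ← mul_assoc, mul_inv_cancel₀ (ne_of_gt hNR), one_mul] at hlt
      exact lt_irrefl _ hlt
    obtain ⟨k, hk, hkgap⟩ := hgap
    set t : ℝ := y k with ht
    -- values above t are ≥ y (k+1)
    have hup : ∀ v : Fin N, ¬ x v ≤ t → y (k + 1) ≤ x v := by
      intro v hv
      have htk : t = g ⟨k, by omega⟩ := by rw [ht, hyval k (by omega)]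
      rw [hxg v] at hv ⊢
      rw [htk] at hv
      rw [hyval (k + 1) (by omega)]
      have hkm : k < ((σ.symm v : Fin N) : ℕ) := by
        by_contra hle
        push_neg at hle
        exact hv (hmono (by simp [Fin.le_def]; omega))
      exact hmono (by simp [Fin.le_def]; omega)
    -- max node is above t, min node is ≤ t
    obtain ⟨imax, _, hmax⟩ := Finset.exists_mem_eq_sup' Finset.univ_nonempty x
    obtain ⟨imin, _, hmin⟩ := Finset.exists_mem_eq_inf' Finset.univ_nonempty x
    have himax : ¬ x imax ≤ t := by
      rw [← hmax, hsup, ht]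
      have h1 : y (k + 1) ≤ y (N - 1) := hymono (by omega)
      have h2 : y k < y (k + 1) := by linarith
      linarith
    have himin : x imin ≤ t := by
      rw [← hmin, hinf, ht]
      exact hymono (Nat.zero_le _)
    by_cases hroot : x root ≤ t
    · obtain ⟨u, v, he, hu, hv⟩ :=
        cross14 (S := fun i => x i ≤ t) (hspan imax) hroot himax
      refine ⟨v, u, he, ?_⟩
      have h1 : y (k + 1) ≤ x v := hup v hv
      have h2 : x u ≤ t := hu
      calc ε ≤ x v - x u := by rw [ht] at h2; linarith
        _ ≤ |x v - x u| := le_abs_self _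
    · obtain ⟨u, v, he, hu, hv⟩ :=
        cross14 (S := fun i => ¬ x i ≤ t) (hspan imin) hroot (not_not.mpr himin)
      refine ⟨v, u, he, ?_⟩
      have h1 : y (k + 1) ≤ x u := hup u hu
      have h2 : x v ≤ t := not_not.mp hv
      rw [abs_sub_comm]
      calc ε ≤ x u - x v := by rw [ht] at h2; linarith
        _ ≤ |x u - x v| := le_abs_self _
  · -- spread ≤ 0 : any edge works; get one from a nontrivial path
    push_neg at hSpos
    have hεle : ε ≤ 0 := mul_nonpos_of_nonneg_of_nonpos (le_of_lt (inv_pos.mpr hNR)) hSpos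
    have : Nontrivial (Fin N) := Fin.nontrivial_iff_two_le.mpr hN
    obtain ⟨i, hi⟩ := exists_ne root
    rcases (Relation.ReflTransGen.cases_head (hspan i)) with h | ⟨c, hc, _⟩
    · exact absurd h.symm hi
    · exact ⟨c, root, hc, le_trans hεle (abs_nonneg _)⟩
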